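/- arXiv:1102.5763 — 4 statements merged into one kernel-verified Lean document; each statement's English description precedes it below -/
import Mathlib

section
/- Let S ⊆ ℝⁿ be an arbitrary closed set and μ a finite Borel measure with supp μ = S such that x ↦ exp(|x_i|) is μ-integrable for every i = 1,…,n. Then a polynomial f ∈ ℝ[x] is nonnegative on S if and only if ∫ σ·f dμ ≥ 0 for every sum of squares σ ∈ Σ[x]. -/
/-!
Suppose `f (x₀) < 0` for some `x₀ ∈ S`. The bump `h x = ∏ i, sinc (t * (x i - x₀ i)) ^ 2` equals
`1` at `x₀` and is uniformly smaller than `1` away from `x₀`. The Taylor partial sums `p_m` of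
`sinc` are polynomials bounded by `exp (t * |v|)`; for `t` small the exponential integrability of
`μ` lets dominated convergence carry the hypothesis `0 ≤ ∫ σ f` (applied to the sums of squares
`σ * p_m ^ 2`) over to `0 ≤ ∫ σ h f`, and iterating gives `0 ≤ ∫ h ^ k f` for every `k`. But
`h ^ k` concentrates near `x₀`, where `f < 0` and which has positive measure since `x₀ ∈ supp μ`,
so `∫ h ^ k f < 0` for large `k`.
-/
open MeasureTheory MvPolynomial

/-- Support of a Borel measure: points all of whose open neighborhoods have
positive measure (the smallest closed set of full measure). -/
def msupport {n : ℕ} (μ : Measure (Fin n → ℝ)) : Set (Fin n → ℝ) :=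
  {x | ∀ U : Set (Fin n → ℝ), IsOpen U → x ∈ U → μ U ≠ 0}

/-- A polynomial is a sum of squares. -/
def IsSOS {n : ℕ} (σ : MvPolynomial (Fin n) ℝ) : Prop :=
  ∃ (k : ℕ) (p : Fin k → MvPolynomial (Fin n) ℝ), σ = ∑ i, (p i) ^ 2

open Real Filter Topology Finset
open scoped Nat

namespace Real

theorem hasSum_sinc (v : ℝ) :
    HasSum (fun j : ℕ => (-1) ^ j * v ^ (2 * j) / (2 * j + 1)!) (sinc v) := by
  rcases eq_or_ne v 0 with rfl | hv
  · rw [sinc_zero]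
    convert hasSum_single (f := fun j : ℕ => (-1) ^ j * (0 : ℝ) ^ (2 * j) / (2 * j + 1)!) 0
      fun j hj => by simp [hj] using 1
    simp
  · rw [sinc_of_ne_zero hv]
    have hterm : (fun j : ℕ => (-1) ^ j * v ^ (2 * j) / (2 * j + 1)!) =
        fun j => (-1) ^ j * v ^ (2 * j + 1) / (2 * j + 1)! / v := by
      funext j
      rw [pow_succ]
      field_simp
    rw [hterm]
    exact (hasSum_sin v).div_const v

theorem abs_sum_range_sinc_le (m : ℕ) (v : ℝ) :
    |∑ j ∈ range m, (-1) ^ j * v ^ (2 * j) / (2 * j + 1)!| ≤ exp |v| := calc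
  _ ≤ ∑ j ∈ range m, |v| ^ (2 * j) / (2 * j)! := by
      refine (abs_sum_le_sum_abs _ _).trans (sum_le_sum fun j _ => ?_)
      rw [abs_div, abs_mul, abs_pow, abs_neg, abs_one, one_pow, one_mul, abs_pow, Nat.abs_cast]
      exact div_le_div_of_nonneg_left (by positivity) (by positivity)
        (by exact_mod_cast Nat.factorial_le (by omega))
  _ ≤ cosh |v| := sum_le_hasSum _ (fun j _ => by positivity) (hasSum_cosh |v|)
  _ ≤ exp |v| := by
      rw [cosh_eq]
      linarith [exp_le_exp.2 (neg_le_self (abs_nonneg v))]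

theorem exists_abs_sinc_le_of_le_abs {δ : ℝ} (hδ : 0 < δ) :
    ∃ b < 1, ∀ v, δ ≤ |v| → |sinc v| ≤ b := by
  -- `|sinc|` attains a maximum `< 1` on the compact annulus `δ ≤ |v| ≤ max δ 2`, and beyond it
  -- `|sinc v| ≤ 1 / |v| ≤ 1 / 2`.
  set R := max δ 2
  have hK : IsCompact (Metric.closedBall (0 : ℝ) R \ Metric.ball 0 δ) :=
    (isCompact_closedBall 0 R).diff Metric.isOpen_ball
  have hδK : δ ∈ Metric.closedBall (0 : ℝ) R \ Metric.ball 0 δ := by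
    simp [abs_of_pos hδ, R]
  obtain ⟨w, hwK, hw⟩ := hK.exists_isMaxOn ⟨δ, hδK⟩ continuous_sinc.abs.continuousOn
  simp only [Set.mem_sdiff, Metric.mem_closedBall, Metric.mem_ball, dist_zero_right, norm_eq_abs,
    not_lt] at hwK
  have hw0 : w ≠ 0 := by rintro rfl; simp at hwK; linarith
  refine ⟨max |sinc w| (1 / 2), max_lt ?_ (by norm_num), fun v hv => ?_⟩
  · rw [sinc_of_ne_zero hw0, abs_div, div_lt_one (abs_pos.2 hw0)]
    exact abs_sin_lt_abs hw0
  · rcases le_or_gt |v| R with hvR | hvR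
    · refine le_max_of_le_left (hw ?_)
      simp [hvR, hv]
    · have hv0 : v ≠ 0 := by rintro rfl; simp at hv; linarith
      have h2 : 2 ≤ |v| := (le_max_right δ 2).trans hvR.le
      refine le_max_of_le_right ?_
      rw [sinc_of_ne_zero hv0, abs_div, div_le_iff₀ (abs_pos.2 hv0)]
      linarith [abs_sin_le_one v]

end Real

noncomputable section

variable {n : ℕ}

def sincBump (t : ℝ) (x₀ x : Fin n → ℝ) : ℝ := ∏ i, sinc (t * (x i - x₀ i))

theorem continuous_sincBump (t : ℝ) (x₀ : Fin n → ℝ) : Continuous (sincBump t x₀) :=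
  continuous_finsetProd _ fun i _ =>
    continuous_sinc.comp (continuous_const.mul ((continuous_apply i).sub continuous_const))

theorem sincBump_self (t : ℝ) (x₀ : Fin n → ℝ) : sincBump t x₀ x₀ = 1 := by
  simp [sincBump]

theorem abs_sincBump_le_one (t : ℝ) (x₀ x : Fin n → ℝ) : |sincBump t x₀ x| ≤ 1 := by
  rw [sincBump, abs_prod]
  exact prod_le_one (fun i _ => abs_nonneg _) fun i _ => abs_sinc_le_one _

theorem exists_sincBump_sq_le {t ρ : ℝ} (ht : 0 < t) (hρ : 0 < ρ) (x₀ : Fin n → ℝ) :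
    ∃ b ∈ Set.Ico (0 : ℝ) 1, ∀ x, ρ ≤ dist x x₀ → sincBump t x₀ x ^ 2 ≤ b := by
  obtain ⟨b, hb1, hb⟩ := exists_abs_sinc_le_of_le_abs (mul_pos ht hρ)
  have hb0 : 0 ≤ b := (abs_nonneg _).trans (hb (t * ρ) (le_abs_self _))
  refine ⟨b ^ 2, ⟨by positivity, pow_lt_one₀ hb0 hb1 two_ne_zero⟩, fun x hx => ?_⟩
  obtain ⟨i, hi⟩ : ∃ i, ρ ≤ |x i - x₀ i| := by
    by_contra! h
    exact hx.not_gt ((dist_pi_lt_iff hρ).2 fun i => (Real.dist_eq _ _).trans_lt (h i))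
  rw [← sq_abs]
  refine pow_le_pow_left₀ (abs_nonneg _) ?_ 2
  calc |sincBump t x₀ x|
      = |sinc (t * (x i - x₀ i))| * ∏ j ∈ univ.erase i, |sinc (t * (x j - x₀ j))| := by
        rw [sincBump, abs_prod, mul_prod_erase _ (fun j => |sinc (t * (x j - x₀ j))|) (mem_univ i)]
    _ ≤ b * 1 := by
        gcongr
        · exact hb _ (by rw [abs_mul, abs_of_pos ht]; gcongr)
        · exact prod_le_one (fun j _ => abs_nonneg _) fun j _ => abs_sinc_le_one _
    _ = b := mul_one b

def sincBumpTaylor (t : ℝ) (x₀ : Fin n → ℝ) (m : ℕ) : MvPolynomial (Fin n) ℝ :=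
  ∏ i, ∑ j ∈ range m, C ((-1) ^ j * t ^ (2 * j) / (2 * j + 1)!) * (X i - C (x₀ i)) ^ (2 * j)

theorem eval_sincBumpTaylor (t : ℝ) (x₀ x : Fin n → ℝ) (m : ℕ) :
    eval x (sincBumpTaylor t x₀ m) =
      ∏ i, ∑ j ∈ range m, (-1) ^ j * (t * (x i - x₀ i)) ^ (2 * j) / (2 * j + 1)! := by
  simp only [sincBumpTaylor, map_prod, map_sum, map_mul, map_pow, map_sub, eval_C, eval_X,
    mul_pow]
  refine prod_congr rfl fun i _ => sum_congr rfl fun j _ => ?_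
  ring

theorem tendsto_eval_sincBumpTaylor (t : ℝ) (x₀ x : Fin n → ℝ) :
    Tendsto (fun m => eval x (sincBumpTaylor t x₀ m)) atTop (𝓝 (sincBump t x₀ x)) := by
  simp only [eval_sincBumpTaylor]
  exact tendsto_finsetProd _ fun i _ => (hasSum_sinc _).tendsto_sum_nat

theorem abs_eval_sincBumpTaylor_le {t : ℝ} (ht : 0 ≤ t) (x₀ x : Fin n → ℝ) (m : ℕ) :
    |eval x (sincBumpTaylor t x₀ m)| ≤ exp (t * ∑ i, |x₀ i|) * exp (t * ∑ i, |x i|) := by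
  rw [eval_sincBumpTaylor, abs_prod, ← exp_add, ← mul_add, ← sum_add_distrib, mul_sum, exp_sum]
  refine prod_le_prod (fun i _ => abs_nonneg _) fun i _ => (abs_sum_range_sinc_le m _).trans ?_
  rw [abs_mul, abs_of_nonneg ht, add_comm]
  gcongr
  exact abs_sub _ _

theorem exists_abs_eval_le_mul_exp (p : MvPolynomial (Fin n) ℝ) {ε : ℝ} (hε : 0 < ε) :
    ∃ C, 0 ≤ C ∧ ∀ x : Fin n → ℝ, |eval x p| ≤ C * exp (ε * ∑ i, |x i|) := by
  induction p using MvPolynomial.induction_on generalizing ε with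
  | C a =>
    refine ⟨|a|, abs_nonneg a, fun x => ?_⟩
    rw [eval_C]
    exact le_mul_of_one_le_right (abs_nonneg a) (one_le_exp (by positivity))
  | add p q hp hq =>
    obtain ⟨Cp, hCp0, hCp⟩ := hp hε
    obtain ⟨Cq, hCq0, hCq⟩ := hq hε
    refine ⟨Cp + Cq, by positivity, fun x => ?_⟩
    rw [map_add, add_mul]
    exact (abs_add_le _ _).trans (add_le_add (hCp x) (hCq x))
  | mul_X p i hp =>
    obtain ⟨C, hC0, hC⟩ := hp (half_pos hε)
    refine ⟨C * (2 / ε), by positivity, fun x => ?_⟩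
    set s := ∑ j, |x j|
    have hxi : |x i| ≤ 2 / ε * exp (ε / 2 * s) := calc
      |x i| ≤ s := single_le_sum (f := fun j => |x j|) (fun j _ => abs_nonneg _) (mem_univ i)
      _ = 2 / ε * (ε / 2 * s) := by field_simp
      _ ≤ 2 / ε * exp (ε / 2 * s) := by gcongr; linarith [add_one_le_exp (ε / 2 * s)]
    calc |eval x (p * X i)| = |eval x p| * |x i| := by rw [map_mul, eval_X, abs_mul]
      _ ≤ C * exp (ε / 2 * s) * (2 / ε * exp (ε / 2 * s)) := by gcongr; exact hC x
      _ = C * (2 / ε) * exp (ε * s) := by rw [mul_mul_mul_comm, ← exp_add]; ring_nf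

theorem exp_mul_sum_abs_le {β : ℝ} (hβ : 0 ≤ β) (hβn : β * n ≤ 1) (x : Fin n → ℝ) :
    exp (β * ∑ i, |x i|) ≤ 1 + ∑ i, exp |x i| := by
  rcases isEmpty_or_nonempty (Fin n) with hn | hn
  · simp
  obtain ⟨i₀, -, hi₀⟩ := exists_max_image univ (fun i => |x i|) univ_nonempty
  have hsum : β * ∑ i, |x i| ≤ |x i₀| := calc
    β * ∑ i, |x i| ≤ β * (n * |x i₀|) := by
      gcongr
      simpa using sum_le_card_nsmul univ _ _ fun i _ => hi₀ i (mem_univ i)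
    _ = β * n * |x i₀| := by ring
    _ ≤ |x i₀| := mul_le_of_le_one_left (abs_nonneg _) hβn
  calc exp (β * ∑ i, |x i|) ≤ exp |x i₀| := exp_le_exp.2 hsum
    _ ≤ ∑ i, exp |x i| := single_le_sum (f := fun i => exp |x i|) (fun i _ => (exp_pos _).le)
        (mem_univ i₀)
    _ ≤ 1 + ∑ i, exp |x i| := le_add_of_nonneg_left zero_le_one

section Integrability

variable {μ : Measure (Fin n → ℝ)} [IsFiniteMeasure μ]

theorem integrable_eval_mul_exp (hexp : ∀ i : Fin n, Integrable (fun x => exp |x i|) μ)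
    (p : MvPolynomial (Fin n) ℝ) {β : ℝ} (hβ : 0 ≤ β) (hβn : β * n < 1) :
    Integrable (fun x => eval x p * exp (β * ∑ i, |x i|)) μ := by
  set ε := (1 - β * n) / (n + 1)
  have hε : 0 < ε := by positivity [sub_pos.2 hβn]
  have hεn : (β + ε) * n ≤ 1 := by
    have : ε * n ≤ 1 - β * n := by
      rw [div_mul_eq_mul_div, div_le_iff₀ (by positivity)]
      nlinarith
    linarith
  obtain ⟨C, hC0, hC⟩ := exists_abs_eval_le_mul_exp p hε
  have hbound : Integrable (fun x => C * (1 + ∑ i, exp |x i|)) μ :=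
    ((integrable_const 1).add (integrable_finsetSum univ fun i _ => hexp i)).const_mul C
  refine hbound.mono'
    ((continuous_eval p).mul (by fun_prop)).aestronglyMeasurable (ae_of_all _ fun x => ?_)
  rw [norm_mul, norm_eq_abs, norm_eq_abs, abs_exp]
  calc |eval x p| * exp (β * ∑ i, |x i|)
      ≤ C * exp (ε * ∑ i, |x i|) * exp (β * ∑ i, |x i|) := by gcongr; exact hC x
    _ = C * exp ((β + ε) * ∑ i, |x i|) := by rw [mul_assoc, ← exp_add]; ring_nf
    _ ≤ C * (1 + ∑ i, exp |x i|) := by gcongr; exact exp_mul_sum_abs_le (by positivity) hεn x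

theorem integrable_eval (hexp : ∀ i : Fin n, Integrable (fun x => exp |x i|) μ)
    (p : MvPolynomial (Fin n) ℝ) : Integrable (fun x => eval x p) μ := by
  simpa using integrable_eval_mul_exp hexp p le_rfl (by simp)

end Integrability

theorem IsSOS.eval_nonneg {σ : MvPolynomial (Fin n) ℝ} (hσ : IsSOS σ) (x : Fin n → ℝ) :
    0 ≤ eval x σ := by
  obtain ⟨k, p, rfl⟩ := hσ
  simp only [map_sum, map_pow]
  positivity

theorem IsSOS.mul_sq {σ : MvPolynomial (Fin n) ℝ} (hσ : IsSOS σ) (q : MvPolynomial (Fin n) ℝ) :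
    IsSOS (σ * q ^ 2) := by
  obtain ⟨k, p, rfl⟩ := hσ
  exact ⟨k, fun i => p i * q, by simp only [sum_mul, mul_pow]⟩

theorem isSOS_one : IsSOS (1 : MvPolynomial (Fin n) ℝ) :=
  ⟨1, fun _ => 1, by simp⟩

theorem integral_sos_mul_sq_mul_nonneg {μ : Measure (Fin n → ℝ)} {F g E : (Fin n → ℝ) → ℝ}
    {P : ℕ → MvPolynomial (Fin n) ℝ} (hF : AEStronglyMeasurable F μ)
    (hP : ∀ x, Tendsto (fun m => eval x (P m)) atTop (𝓝 (g x)))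
    (hPE : ∀ m x, |eval x (P m)| ≤ E x)
    (hEF : ∀ σ, IsSOS σ → Integrable (fun x => E x ^ 2 * (eval x σ * F x)) μ)
    (hmom : ∀ σ, IsSOS σ → 0 ≤ ∫ x, eval x σ * F x ∂μ)
    {σ : MvPolynomial (Fin n) ℝ} (hσ : IsSOS σ) :
    0 ≤ ∫ x, eval x σ * (g x ^ 2 * F x) ∂μ := by
  have hbound (m : ℕ) (x : Fin n → ℝ) :
      ‖eval x (σ * P m ^ 2) * F x‖ ≤ ‖E x ^ 2 * (eval x σ * F x)‖ := by
    have hPE2 : eval x (P m) ^ 2 ≤ E x ^ 2 :=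
      sq_le_sq' (abs_le.1 (hPE m x)).1 ((le_abs_self _).trans (hPE m x))
    simp only [map_mul, map_pow, norm_mul, norm_pow, norm_eq_abs, sq_abs]
    calc |eval x σ| * eval x (P m) ^ 2 * |F x| = eval x (P m) ^ 2 * (|eval x σ| * |F x|) := by
          ring
      _ ≤ E x ^ 2 * (|eval x σ| * |F x|) := by gcongr
  have hlim (x : Fin n → ℝ) : Tendsto (fun m => eval x (σ * P m ^ 2) * F x) atTop
      (𝓝 (eval x σ * (g x ^ 2 * F x))) := by
    simpa only [map_mul, map_pow, mul_assoc] using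
      (((hP x).pow 2).const_mul (eval x σ)).mul_const (F x)
  exact ge_of_tendsto' (tendsto_integral_of_dominated_convergence _
      (fun m => (continuous_eval _).aestronglyMeasurable.mul hF) (hEF σ hσ).norm
      (fun m => ae_of_all _ (hbound m)) (ae_of_all _ hlim))
    fun m => hmom _ (hσ.mul_sq (P m))

theorem integral_sos_mul_pow_mul_nonneg {μ : Measure (Fin n → ℝ)} {f g E : (Fin n → ℝ) → ℝ}
    {P : ℕ → MvPolynomial (Fin n) ℝ} (hf : AEStronglyMeasurable f μ)
    (hg : AEStronglyMeasurable g μ) (hg1 : ∀ x, |g x| ≤ 1)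
    (hP : ∀ x, Tendsto (fun m => eval x (P m)) atTop (𝓝 (g x)))
    (hPE : ∀ m x, |eval x (P m)| ≤ E x)
    (hEf : ∀ σ, IsSOS σ → Integrable (fun x => E x ^ 2 * (eval x σ * f x)) μ)
    (hmom : ∀ σ, IsSOS σ → 0 ≤ ∫ x, eval x σ * f x ∂μ) (k : ℕ)
    {σ : MvPolynomial (Fin n) ℝ} (hσ : IsSOS σ) :
    0 ≤ ∫ x, eval x σ * ((g x ^ 2) ^ k * f x) ∂μ := by
  induction k generalizing σ with
  | zero => simpa using hmom σ hσ
  | succ k ih =>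
    have hgk : AEStronglyMeasurable (fun x => (g x ^ 2) ^ k) μ := (hg.pow 2).pow k
    have hgk1 (x : Fin n → ℝ) : ‖(g x ^ 2) ^ k‖ ≤ 1 := by
      rw [norm_eq_abs, abs_pow, abs_pow]
      exact pow_le_one₀ (by positivity) (pow_le_one₀ (abs_nonneg _) (hg1 x))
    have key := integral_sos_mul_sq_mul_nonneg (F := fun x => (g x ^ 2) ^ k * f x)
      (hgk.mul hf) hP hPE
      (fun σ' hσ' => ((hEf σ' hσ').bdd_mul hgk (ae_of_all _ hgk1)).congr
        (ae_of_all _ fun x => by ring)) (fun _ => ih) hσ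
    simpa only [pow_succ', mul_assoc] using key

theorem exists_pow_mul_lt_mul_pow {a b : ℝ} (hb : 0 ≤ b) (hba : b < a) (C : ℝ) {D : ℝ}
    (hD : 0 < D) : ∃ k : ℕ, b ^ k * C < D * a ^ k := by
  have ha : 0 < a := hb.trans_lt hba
  obtain ⟨k, hk⟩ : ∃ k : ℕ, (b / a) ^ k < D / (|C| + 1) :=
    exists_pow_lt_of_lt_one (by positivity) ((div_lt_one ha).2 hba)
  refine ⟨k, ?_⟩
  rw [div_pow, lt_div_iff₀ (by positivity), div_mul_eq_mul_div, div_lt_iff₀ (by positivity)] at hk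
  nlinarith [le_abs_self C, pow_nonneg hb k]

theorem exists_integral_pow_mul_neg {X : Type*} [MeasurableSpace X] {μ : Measure X}
    [IsFiniteMeasure μ] {f h : X → ℝ} {U V : Set X} {a b c : ℝ} (hf : Integrable f μ)
    (hh : AEStronglyMeasurable h μ) (hh0 : ∀ x, 0 ≤ h x) (hh1 : ∀ x, h x ≤ 1)
    (hU : MeasurableSet U) (hμU : μ U ≠ 0) (hc : 0 < c) (hb : 0 ≤ b) (hba : b < a)
    (hfV : ∀ x ∈ V, f x ≤ -c) (hhU : ∀ x ∈ U, a ≤ h x) (hhV : ∀ x ∉ V, h x ≤ b) :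
    ∃ k : ℕ, ∫ x, h x ^ k * f x ∂μ < 0 := by
  have ha : 0 < a := hb.trans_lt hba
  have hμU' : 0 < μ.real U := ENNReal.toReal_pos hμU (measure_ne_top μ U)
  obtain ⟨k, hk⟩ := exists_pow_mul_lt_mul_pow hb hba (∫ x, |f x| ∂μ) (mul_pos hc hμU')
  have hpt (x : X) : h x ^ k * f x ≤ U.indicator (fun _ => -c * a ^ k) x + b ^ k * |f x| := by
    have hbf : 0 ≤ b ^ k * |f x| := by positivity
    by_cases hxV : x ∈ V
    · have hfx := hfV x hxV
      by_cases hxU : x ∈ U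
      · rw [Set.indicator_of_mem hxU]
        have : a ^ k ≤ h x ^ k := pow_le_pow_left₀ ha.le (hhU x hxU) k
        nlinarith [pow_pos ha k]
      · rw [Set.indicator_of_notMem hxU]
        nlinarith [pow_nonneg (hh0 x) k]
    · have hxU : x ∉ U := fun hxU => (hhU x hxU).not_gt ((hhV x hxV).trans_lt hba)
      rw [Set.indicator_of_notMem hxU, zero_add]
      calc h x ^ k * f x ≤ h x ^ k * |f x| :=
            mul_le_mul_of_nonneg_left (le_abs_self _) (pow_nonneg (hh0 x) k)
        _ ≤ b ^ k * |f x| :=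
            mul_le_mul_of_nonneg_right (pow_le_pow_left₀ (hh0 x) (hhV x hxV) k) (abs_nonneg _)
  have hint : Integrable (fun x => h x ^ k * f x) μ :=
    hf.bdd_mul (hh.pow k) (ae_of_all _ fun x => by
      rw [norm_eq_abs, abs_pow, abs_of_nonneg (hh0 x)]
      exact pow_le_one₀ (hh0 x) (hh1 x))
  have hind : Integrable (U.indicator fun _ => -c * a ^ k) μ := (integrable_const _).indicator hU
  refine ⟨k, (integral_mono hint (hind.add (hf.abs.const_mul _)) hpt).trans_lt ?_⟩
  simp only [Pi.add_apply]
  rw [integral_add hind (hf.abs.const_mul _), integral_indicator_const _ hU, integral_const_mul,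
    smul_eq_mul]
  linarith

section FiniteMeasure

variable {μ : Measure (Fin n → ℝ)} [IsFiniteMeasure μ]

theorem integral_sincBump_sq_pow_mul_nonneg
    (hexp : ∀ i : Fin n, Integrable (fun x => exp |x i|) μ) {f : MvPolynomial (Fin n) ℝ}
    (hmom : ∀ σ, IsSOS σ → 0 ≤ ∫ x, eval x σ * eval x f ∂μ) {t : ℝ} (ht : 0 < t)
    (h2t : 2 * t * n < 1) (x₀ : Fin n → ℝ) (k : ℕ) :
    0 ≤ ∫ x, (sincBump t x₀ x ^ 2) ^ k * eval x f ∂μ := by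
  have hint (σ : MvPolynomial (Fin n) ℝ) : Integrable (fun x =>
      (exp (t * ∑ i, |x₀ i|) * exp (t * ∑ i, |x i|)) ^ 2 * (eval x σ * eval x f)) μ := by
    refine ((integrable_eval_mul_exp hexp (σ * f) (by positivity) h2t).const_mul
      (exp (t * ∑ i, |x₀ i|) ^ 2)).congr (ae_of_all _ fun x => ?_)
    simp only [map_mul, mul_pow, ← exp_nat_mul]
    push_cast
    ring_nf
  simpa using integral_sos_mul_pow_mul_nonneg (continuous_eval f).aestronglyMeasurable
    (continuous_sincBump t x₀).aestronglyMeasurable (abs_sincBump_le_one t x₀)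
    (tendsto_eval_sincBumpTaylor t x₀) (fun m x => abs_eval_sincBumpTaylor_le ht.le x₀ x m)
    (fun σ _ => hint σ) hmom k isSOS_one

theorem exists_integral_sincBump_sq_pow_mul_neg {f : (Fin n → ℝ) → ℝ} (hf : Continuous f)
    (hfμ : Integrable f μ) {t : ℝ} (ht : 0 < t) {x₀ : Fin n → ℝ} (hx₀ : x₀ ∈ msupport μ)
    (hfx₀ : f x₀ < 0) : ∃ k : ℕ, ∫ x, (sincBump t x₀ x ^ 2) ^ k * f x ∂μ < 0 := by
  have hh : Continuous fun x => sincBump t x₀ x ^ 2 := (continuous_sincBump t x₀).pow 2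
  obtain ⟨ρ, hρ, hfρ⟩ := Metric.eventually_nhds_iff.1 <|
    hf.continuousAt.eventually_lt continuousAt_const (by linarith : f x₀ < f x₀ / 2)
  obtain ⟨b, ⟨hb0, hb1⟩, hbρ⟩ := exists_sincBump_sq_le ht hρ x₀
  obtain ⟨ρ', hρ', hρ'b⟩ := Metric.eventually_nhds_iff.1 <|
    continuousAt_const.eventually_lt hh.continuousAt
      (by rw [sincBump_self]; linarith : (1 + b) / 2 < sincBump t x₀ x₀ ^ 2)
  exact exists_integral_pow_mul_neg (V := Metric.ball x₀ ρ) hfμ hh.aestronglyMeasurable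
    (fun x => sq_nonneg _) (fun x => (sq_le_one_iff_abs_le_one _).2 (abs_sincBump_le_one t x₀ x))
    Metric.isOpen_ball.measurableSet (hx₀ _ Metric.isOpen_ball (Metric.mem_ball_self hρ'))
    (by linarith : 0 < -f x₀ / 2) hb0 (by linarith : b < (1 + b) / 2)
    (fun x hx => by linarith [hfρ hx]) (fun x hx => (hρ'b hx).le)
    (fun x hx => hbρ x (not_lt.1 hx))

end FiniteMeasure

theorem msupport_eq_support (μ : Measure (Fin n → ℝ)) : msupport μ = μ.support := by
  ext x
  simp only [msupport, Measure.support_eq_forall_isOpen, pos_iff_ne_zero]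
  exact ⟨fun h U hxU hU => h U hU hxU, fun h U hU hxU => h U hxU hU⟩

end

theorem stmt1_general {n : ℕ} (S : Set (Fin n → ℝ))
    (μ : Measure (Fin n → ℝ)) [IsFiniteMeasure μ]
    (hsupp : msupport μ = S)
    (hexp : ∀ i : Fin n, Integrable (fun x => Real.exp |x i|) μ)
    (f : MvPolynomial (Fin n) ℝ) :
    (∀ x ∈ S, 0 ≤ eval x f) ↔
      ∀ σ : MvPolynomial (Fin n) ℝ, IsSOS σ → 0 ≤ ∫ x, eval x σ * eval x f ∂μ := by
  subst hsupp
  constructor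
  · intro hf σ hσ
    have hS : ∀ᵐ x ∂μ, x ∈ msupport μ := by
      rw [msupport_eq_support]
      exact Measure.support_mem_ae
    exact integral_nonneg_of_ae (hS.mono fun x hx => mul_nonneg (hσ.eval_nonneg x) (hf x hx))
  · intro hmom
    by_contra! ⟨x₀, hx₀, hfx₀⟩
    obtain ⟨t, ht, h2t⟩ : ∃ t : ℝ, 0 < t ∧ 2 * t * n < 1 :=
      ⟨1 / (2 * (n + 1)), by positivity, by field_simp; linarith⟩
    obtain ⟨k, hk⟩ := exists_integral_sincBump_sq_pow_mul_neg (continuous_eval f)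
      (integrable_eval hexp f) ht hx₀ hfx₀
    exact hk.not_ge (integral_sincBump_sq_pow_mul_nonneg hexp hmom ht h2t x₀ k)

theorem stmt1 {n : ℕ} (S : Set (Fin n → ℝ)) (hS : IsClosed S)
    (μ : Measure (Fin n → ℝ)) [IsFiniteMeasure μ]
    (hsupp : msupport μ = S)
    (hexp : ∀ i : Fin n, Integrable (fun x => Real.exp |x i|) μ)
    (f : MvPolynomial (Fin n) ℝ) :
    (∀ x ∈ S, 0 ≤ eval x f) ↔
      ∀ σ : MvPolynomial (Fin n) ℝ, IsSOS σ → 0 ≤ ∫ x, eval x σ * eval x f ∂μ :=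
  stmt1_general S μ hsupp hexp f
end

section
/- For every x ∈ ℝⁿ, the evaluation functional f ↦ f(x) on ℝ[x] is continuous with respect to the weighted ℓ1-norm ‖f‖_w = Σ_α (2⌈|α|/2⌉)! |f_α|; more precisely, with a := max_i |x_i|, one has |x^α| ≤ exp(a)·(2⌈|α|/2⌉)! for all α ∈ ℕⁿ. -/
open MvPolynomial

/-- The weight `w_α = (2⌈|α|/2⌉)!`. -/
def wt {n : ℕ} (α : Fin n →₀ ℕ) : ℕ :=
  (2 * (((α.sum fun _ e => e) + 1) / 2)).factorial

/-- The weighted ℓ₁-norm `‖f‖_w = ∑_α w_α |f_α|`. -/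
def wnorm {n : ℕ} (f : MvPolynomial (Fin n) ℝ) : ℝ :=
  ∑ α ∈ f.support, (wt α : ℝ) * |f.coeff α|

theorem stmt7 {n : ℕ} (x : Fin n → ℝ) (a : ℝ) (ha : a = ⨆ i, |x i|) :
    (∀ α : Fin n →₀ ℕ, |∏ i, x i ^ α i| ≤ Real.exp a * wt α) ∧
    (∀ f : MvPolynomial (Fin n) ℝ, |eval x f| ≤ Real.exp a * wnorm f) := by
  have ha0 : 0 ≤ a := ha ▸ Real.iSup_nonneg fun i => abs_nonneg _
  have hxa : ∀ i, |x i| ≤ a := by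
    intro i
    rw [ha]
    exact le_ciSup (f := fun i => |x i|) (Set.Finite.bddAbove (Set.finite_range _)) i
  have key : ∀ α : Fin n →₀ ℕ, |∏ i, x i ^ α i| ≤ Real.exp a * wt α := by
    intro α
    set k := α.sum fun _ e => e with hk
    set m := 2 * ((k + 1) / 2) with hm
    have hkm : k ≤ m := by omega
    have h1 : |∏ i, x i ^ α i| ≤ a ^ k := by
      calc |∏ i, x i ^ α i| = ∏ i, |x i| ^ α i := by
            rw [Finset.abs_prod]; simp [abs_pow]
        _ ≤ ∏ i, a ^ α i := by
            apply Finset.prod_le_prod (fun i _ => by positivity)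
            intro i _
            exact pow_le_pow_left₀ (abs_nonneg _) (hxa i) _
        _ = a ^ k := by
            rw [Finset.prod_pow_eq_pow_sum]
            congr 1
            rw [hk, Finsupp.sum]
            exact (Finset.sum_subset (Finset.subset_univ α.support)
              (fun i _ hi => Finsupp.notMem_support_iff.mp hi)).symm
    have hwt : (wt α : ℝ) = (m.factorial : ℝ) := by rw [wt]
    rcases le_or_gt a 1 with h | h
    · calc |∏ i, x i ^ α i| ≤ a ^ k := h1
        _ ≤ 1 := pow_le_one₀ ha0 h
        _ ≤ Real.exp a * wt α := by
            rw [hwt]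
            have := Real.one_le_exp ha0
            have : (1 : ℝ) ≤ (m.factorial : ℝ) := by
              exact_mod_cast Nat.one_le_iff_ne_zero.mpr m.factorial_ne_zero
            nlinarith [Real.one_le_exp ha0]
    · calc |∏ i, x i ^ α i| ≤ a ^ k := h1
        _ ≤ a ^ m := pow_le_pow_right₀ h.le hkm
        _ ≤ Real.exp a * wt α := by
            rw [hwt]
            have h2 := Real.pow_div_factorial_le_exp a ha0 m
            have h3 : (0 : ℝ) < (m.factorial : ℝ) := by positivity
            rw [div_le_iff₀ h3] at h2
            linarith
  refine ⟨key, fun f => ?_⟩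
  rw [eval_eq', wnorm, Finset.mul_sum]
  calc |∑ α ∈ f.support, f.coeff α * ∏ i, x i ^ α i|
      ≤ ∑ α ∈ f.support, |f.coeff α * ∏ i, x i ^ α i| := Finset.abs_sum_le_sum_abs _ _
    _ ≤ ∑ α ∈ f.support, Real.exp a * ((wt α : ℝ) * |f.coeff α|) := by
        apply Finset.sum_le_sum
        intro α _
        rw [abs_mul]
        calc |f.coeff α| * |∏ i, x i ^ α i|
            ≤ |f.coeff α| * (Real.exp a * wt α) :=
              mul_le_mul_of_nonneg_left (key α) (abs_nonneg _)
          _ = Real.exp a * ((wt α : ℝ) * |f.coeff α|) := by ring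
end

section
/- Let y = (y_α)_{α ∈ ℕⁿ} be a real sequence whose moment matrix M_k(y), with entries M_k(y)(α,β) = y_{α+β} for α,β ∈ ℕⁿ_k, is positive semidefinite for some k ∈ ℕ. Then for every α ∈ ℕⁿ with |α| ≤ 2k one has |y_α| ≤ max(y_0, max_{i=1,…,n} y_{2k·e_i}), where e_i is the i-th unit multi-index. -/
/-- Degree `|α|` of a multi-index. -/
def mdeg {n : ℕ} (α : Fin n →₀ ℕ) : ℕ := α.sum fun _ e => e

/-!
Positive semidefiniteness of `M_k(y)` gives `y_{γ+δ}² ≤ y_{2γ} y_{2δ}` for `|γ|, |δ| ≤ k`, so it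
suffices to bound the diagonal entries `y_{2γ}`. If `γ` maximises the diagonal and `β + ε = 2γ`,
the same inequality shows that `ε` maximises it too. A maximiser with the largest `∑ γᵢ²` is then
neither of degree `< k` (pass to `γ + eᵢ`) nor supported on two coordinates (move a unit from a
smaller coordinate to a largest one), so it is `0` or some `k eᵢ`.
-/

open Finsupp

section Moments

variable {σ : Type*}

/-- `M_k(y) ⪰ 0`, i.e. `cᵀ M_k(y) c ≥ 0` for every finitely supported `c` indexed by `ℕⁿ_k`. -/
def MomentMatrixPosSemidef (y : (σ →₀ ℕ) → ℝ) (k : ℕ) : Prop :=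
  ∀ c : (σ →₀ ℕ) →₀ ℝ, (∀ α ∈ c.support, α.degree ≤ k) →
    0 ≤ c.sum fun α a => c.sum fun β b => a * b * y (α + β)

namespace MomentMatrixPosSemidef

variable {y : (σ →₀ ℕ) → ℝ} {k : ℕ} (hy : MomentMatrixPosSemidef y k)
include hy

theorem pair_nonneg {γ δ : σ →₀ ℕ} (hγ : γ.degree ≤ k) (hδ : δ.degree ≤ k) (s t : ℝ) :
    0 ≤ s * s * y (γ + γ) + 2 * s * t * y (γ + δ) + t * t * y (δ + δ) := by
  classical
  have hsupp : ∀ α ∈ (single γ s + single δ t).support, α.degree ≤ k := by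
    intro α hα
    rcases Finset.mem_union.mp (support_add hα) with h | h <;>
      rw [Finset.mem_singleton.mp (support_single_subset h)] <;> assumption
  have h := hy _ hsupp
  simp only [mul_zero, zero_mul, implies_true, mul_add, add_mul, sum_add_index', sum_single_index,
    sum_add] at h
  rw [add_comm δ γ] at h
  linarith

theorem diag_nonneg {γ : σ →₀ ℕ} (hγ : γ.degree ≤ k) : 0 ≤ y (γ + γ) := by
  simpa using hy.pair_nonneg hγ hγ 1 0

theorem sq_le_mul_diag {γ δ : σ →₀ ℕ} (hγ : γ.degree ≤ k) (hδ : δ.degree ≤ k) :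
    y (γ + δ) ^ 2 ≤ y (γ + γ) * y (δ + δ) := by
  have h := discrim_le_zero (a := y (γ + γ)) (b := 2 * y (γ + δ)) (c := y (δ + δ)) fun s => by
    linarith [hy.pair_nonneg hγ hδ s 1]
  rw [discrim] at h
  nlinarith

theorem abs_le_of_diag_le {M : ℝ} (hM : ∀ γ : σ →₀ ℕ, γ.degree ≤ k → y (γ + γ) ≤ M)
    {α : σ →₀ ℕ} (hα : α.degree ≤ 2 * k) : |y α| ≤ M := by
  obtain ⟨γ, hγα, hγ⟩ := exists_le_degree_eq α (α.degree - k) (Nat.sub_le _ _)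
  obtain ⟨δ, rfl⟩ := le_iff_exists_add.mp hγα
  have hδ : δ.degree ≤ k := by rw [map_add] at hα hγ; omega
  have hγk : γ.degree ≤ k := by omega
  have hM0 : 0 ≤ M := (hy.diag_nonneg hγk).trans (hM γ hγk)
  refine abs_le_of_sq_le_sq ?_ hM0
  calc y (γ + δ) ^ 2 ≤ y (γ + γ) * y (δ + δ) := hy.sq_le_mul_diag hγk hδ
    _ ≤ M ^ 2 := by
      rw [sq]
      exact mul_le_mul (hM γ hγk) (hM δ hδ) (hy.diag_nonneg hδ) hM0

theorem le_diag_of_add_eq_add_self {γ β ε : σ →₀ ℕ}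
    (hγ : ∀ δ : σ →₀ ℕ, δ.degree ≤ k → y (δ + δ) ≤ y (γ + γ)) (hβε : β + ε = γ + γ)
    (hβ : β.degree ≤ k) (hε : ε.degree ≤ k) : y (γ + γ) ≤ y (ε + ε) := by
  have h := hy.sq_le_mul_diag hβ hε
  rw [hβε] at h
  have := hy.diag_nonneg hβ
  have := hy.diag_nonneg hε
  nlinarith [hγ β hβ, hγ ε hε]

end MomentMatrixPosSemidef
end Moments

theorem exists_eq_add_single_one {σ : Type*} {γ : σ →₀ ℕ} {i : σ} (hi : γ i ≠ 0) :
    ∃ η, γ = η + single i 1 :=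
  le_iff_exists_add'.mp (single_le_iff.mpr (Nat.one_le_iff_ne_zero.mpr hi))

section Combinatorics

variable {σ : Type*} [Fintype σ]

def sumSq (γ : σ →₀ ℕ) : ℕ := ∑ i, γ i ^ 2

theorem sumSq_add_single_one [DecidableEq σ] (γ : σ →₀ ℕ) (i : σ) :
    sumSq (γ + single i 1) = sumSq γ + 2 * γ i + 1 := by
  simp [sumSq, single_apply, add_sq, Finset.sum_add_distrib]

theorem zero_mem_or_single_mem_of_add_eq_add_self_mem {k : ℕ} {S : Set (σ →₀ ℕ)}
    (hS : ∀ γ ∈ S, γ.degree ≤ k) (hne : S.Nonempty)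
    (hclosed : ∀ γ ∈ S, ∀ β ε, β + ε = γ + γ → β.degree ≤ k → ε.degree ≤ k → ε ∈ S) :
    0 ∈ S ∨ ∃ i, single i k ∈ S := by
  classical
  obtain ⟨γ, hγS, hγmax⟩ := Set.exists_max_image S sumSq ((finite_of_degree_le k).subset hS) hne
  rcases eq_or_ne γ 0 with rfl | hγ0
  · exact Or.inl hγS
  right
  obtain ⟨i, hi, himax⟩ := γ.support.exists_max_image γ (support_nonempty_iff.mpr hγ0)
  obtain ⟨η, hη⟩ := exists_eq_add_single_one (mem_support_iff.mp hi)
  rcases (hS γ hγS).lt_or_eq with hlt | hk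
  · have hε := hclosed γ hγS η (γ + single i 1) (by rw [hη]; abel)
      (by rw [hη, map_add] at hlt; omega) (by rw [map_add, degree_single]; omega)
    have hle := hγmax _ hε
    rw [sumSq_add_single_one] at hle
    omega
  by_cases hsupp : γ.support ⊆ {i}
  · refine ⟨i, ?_⟩
    have hγi : γ = single i (γ i) := eq_single_iff.mpr ⟨hsupp, rfl⟩
    rw [hγi, degree_single] at hk
    rwa [← hk, ← hγi]
  obtain ⟨j, hj, hji⟩ := Finset.not_subset.mp hsupp
  rw [Finset.mem_singleton] at hji
  obtain ⟨ζ, rfl⟩ : ∃ ζ, η = ζ + single j 1 :=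
    exists_eq_add_single_one (by simpa [hη, single_apply, Ne.symm hji] using hj)
  subst hη
  have hε := hclosed _ hγS (ζ + single j 1 + single j 1) (ζ + single i 1 + single i 1)
    (by abel) (by simp at hk ⊢; omega) (by simp at hk ⊢; omega)
  have hlt := hγmax _ hε
  have hγji := himax j hj
  simp [sumSq_add_single_one, hji, Ne.symm hji] at hlt hγji
  omega

end Combinatorics

theorem MomentMatrixPosSemidef.exists_diag_max {σ : Type*} [Fintype σ] {y : (σ →₀ ℕ) → ℝ}
    {k : ℕ} (hy : MomentMatrixPosSemidef y k) :
    ∃ γ, (γ = 0 ∨ ∃ i, γ = single i k) ∧ ∀ δ : σ →₀ ℕ, δ.degree ≤ k → y (δ + δ) ≤ y (γ + γ) := by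
  set S := {γ : σ →₀ ℕ | γ.degree ≤ k ∧ ∀ δ : σ →₀ ℕ, δ.degree ≤ k → y (δ + δ) ≤ y (γ + γ)}
  have hne : S.Nonempty := by
    obtain ⟨γ, hγ, hγmax⟩ := Set.exists_max_image _ (fun γ => y (γ + γ)) (finite_of_degree_le k)
      ⟨0, by simp⟩
    exact ⟨γ, hγ, hγmax⟩
  have hclosed : ∀ γ ∈ S, ∀ β ε, β + ε = γ + γ → β.degree ≤ k → ε.degree ≤ k → ε ∈ S :=
    fun γ ⟨_, hγmax⟩ β ε hβε hβ hε =>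
      ⟨hε, fun δ hδ => (hγmax δ hδ).trans (hy.le_diag_of_add_eq_add_self hγmax hβε hβ hε)⟩
  rcases zero_mem_or_single_mem_of_add_eq_add_self_mem (fun γ hγ => hγ.1) hne hclosed with
    h0 | ⟨i, hi⟩
  · exact ⟨0, Or.inl rfl, h0.2⟩
  · exact ⟨_, Or.inr ⟨i, rfl⟩, hi.2⟩

theorem stmt8 {n : ℕ} (y : (Fin n →₀ ℕ) → ℝ) (k : ℕ)
    (hpsd : ∀ c : (Fin n →₀ ℕ) →₀ ℝ, (∀ α ∈ c.support, mdeg α ≤ k) →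
      0 ≤ ∑ α ∈ c.support, ∑ β ∈ c.support, c α * c β * y (α + β))
    (α : Fin n →₀ ℕ) (hα : mdeg α ≤ 2 * k) :
    |y α| ≤ max (y 0) (⨆ i : Fin n, y (Finsupp.single i (2 * k))) := by
  have hy : MomentMatrixPosSemidef y k := hpsd
  obtain ⟨γ, hγ, hγmax⟩ := hy.exists_diag_max
  refine hy.abs_le_of_diag_le (fun δ hδ => (hγmax δ hδ).trans ?_) hα
  rcases hγ with rfl | ⟨i, rfl⟩
  · exact (add_zero (0 : Fin n →₀ ℕ)).symm ▸ le_max_left _ _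
  · rw [← single_add, ← two_mul]
    exact le_max_of_le_right (le_ciSup (Set.finite_range fun i => y (single i (2 * k))).bddAbove i)
end

section
/- Let μ be a finite Borel measure on ℝⁿ with all moments finite such that ∫ x_i^{2k} dμ ≤ (2k)!·M for some M > 0, all i, and all k. Let f ∈ ℝ[x] have degree ≤ 2s. Then for all i and all k ∈ ℕ, |∫ f(x)·x_i^{2k} dμ| ≤ 2Mn·‖f‖_1·(2(k+s))!, where ‖f‖_1 is the sum of absolute values of the coefficients of f. -/
open MeasureTheory MvPolynomial

/-- The ℓ₁-norm of the coefficient vector of a polynomial. -/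
def l1norm {n : ℕ} (f : MvPolynomial (Fin n) ℝ) : ℝ :=
  ∑ α ∈ f.support, |f.coeff α|


-- pointwise bound
lemma ptbd {n : ℕ} (i : Fin n) (α : Fin n →₀ ℕ) (k s : ℕ)
    (hα : ∑ j, α j ≤ 2 * s) (x : Fin n → ℝ) :
    |(∏ j, x j ^ α j) * x i ^ (2 * k)| ≤ 1 + ∑ j, (x j) ^ (2 * (k + s)) := by
  have hne : (Finset.univ : Finset (Fin n)).Nonempty := ⟨i, Finset.mem_univ i⟩
  set B := Finset.univ.sup' hne (fun j => |x j|) with hB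
  have hle : ∀ j, |x j| ≤ B := fun j => Finset.le_sup' (fun j => |x j|) (Finset.mem_univ j)
  have hB0 : 0 ≤ B := le_trans (abs_nonneg (x i)) (hle i)
  obtain ⟨j₀, -, hj₀⟩ := Finset.exists_mem_eq_sup' hne (fun j => |x j|)
  have hsum0 : (0:ℝ) ≤ ∑ j, (x j) ^ (2 * (k + s)) :=
    Finset.sum_nonneg fun j _ => (even_two_mul _).pow_nonneg _
  have habs : |(∏ j, x j ^ α j) * x i ^ (2 * k)|
      = (∏ j, |x j| ^ α j) * |x i| ^ (2 * k) := by
    simp [abs_mul, Finset.abs_prod, abs_pow]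
  have hprod : (∏ j, |x j| ^ α j) * |x i| ^ (2 * k) ≤ B ^ (∑ j, α j + 2 * k) := by
    rw [pow_add, ← Finset.prod_pow_eq_pow_sum]
    have h1 : ∏ j, |x j| ^ α j ≤ ∏ j, B ^ α j :=
      Finset.prod_le_prod (fun j _ => pow_nonneg (abs_nonneg _) _)
        (fun j _ => pow_le_pow_left₀ (abs_nonneg _) (hle j) _)
    have h2 : |x i| ^ (2 * k) ≤ B ^ (2 * k) :=
      pow_le_pow_left₀ (abs_nonneg _) (hle i) _
    exact mul_le_mul h1 h2 (pow_nonneg (abs_nonneg _) _)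
      (Finset.prod_nonneg fun j _ => pow_nonneg hB0 _)
  rw [habs]
  rcases le_total B 1 with hB1 | hB1
  · have : B ^ (∑ j, α j + 2 * k) ≤ 1 := pow_le_one₀ hB0 hB1
    linarith [hprod]
  · have h1 : B ^ (∑ j, α j + 2 * k) ≤ B ^ (2 * (k + s)) := by
      apply pow_le_pow_right₀ hB1
      omega
    have h2 : B ^ (2 * (k + s)) = (x j₀) ^ (2 * (k + s)) := by
      rw [hB, hj₀]
      exact (even_two_mul _).pow_abs _
    have h3 : (x j₀) ^ (2 * (k + s)) ≤ ∑ j, (x j) ^ (2 * (k + s)) :=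
      Finset.single_le_sum (f := fun j => (x j) ^ (2 * (k + s)))
        (fun j _ => (even_two_mul _).pow_nonneg _) (Finset.mem_univ j₀)
    linarith [hprod]


theorem stmt9 {n : ℕ} (μ : Measure (Fin n → ℝ)) [IsFiniteMeasure μ]
    (hmom : ∀ α : Fin n →₀ ℕ, Integrable (fun x => ∏ i, x i ^ α i) μ)
    (M : ℝ) (hM : 0 < M)
    (hbound : ∀ (k : ℕ) (i : Fin n), ∫ x, x i ^ (2 * k) ∂μ ≤ (2 * k).factorial * M)
    (f : MvPolynomial (Fin n) ℝ) (s : ℕ) (hdeg : f.totalDegree ≤ 2 * s) :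
    ∀ (i : Fin n) (k : ℕ),
      |∫ x, eval x f * x i ^ (2 * k) ∂μ| ≤
        2 * M * n * l1norm f * (2 * (k + s)).factorial := by
  intro i k
  have hn1 : (1:ℝ) ≤ n := by
    have := i.2; exact_mod_cast Nat.one_le_iff_ne_zero.mpr (by omega)
  set F : ℝ := ((2 * (k + s)).factorial : ℝ) with hF
  have hF1 : (1:ℝ) ≤ F := by
    rw [hF]; exact_mod_cast Nat.one_le_iff_ne_zero.mpr (Nat.factorial_ne_zero _)
  -- integrability of single-variable monomials
  have hsingle : ∀ (j : Fin n) (e : ℕ), Integrable (fun x : Fin n → ℝ => x j ^ e) μ := by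
    intro j e
    have heq : (fun x : Fin n → ℝ => x j ^ e)
        = fun x => ∏ i, x i ^ (Finsupp.single j e) i := by
      funext x
      rw [Finset.prod_eq_single j (fun b _ hb => by simp [Finsupp.single_apply, Ne.symm hb])
        (fun h => absurd (Finset.mem_univ j) h)]
      simp
    rw [heq]; exact hmom _
  -- integrability of monomial * x_i^{2k}
  have hmon : ∀ α : Fin n →₀ ℕ,
      Integrable (fun x : Fin n → ℝ => (∏ j, x j ^ α j) * x i ^ (2 * k)) μ := by
    intro α
    have heq : (fun x : Fin n → ℝ => (∏ j, x j ^ α j) * x i ^ (2 * k))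
        = fun x => ∏ j, x j ^ (α + Finsupp.single i (2 * k)) j := by
      funext x
      symm
      rw [Finset.prod_congr rfl (fun j _ => by rw [Finsupp.add_apply, pow_add]),
        Finset.prod_mul_distrib]
      congr 1
      rw [Finset.prod_eq_single i (fun b _ hb => by simp [Finsupp.single_apply, Ne.symm hb])
        (fun h => absurd (Finset.mem_univ i) h)]
      simp
    rw [heq]; exact hmom _
  -- dominating function
  have hg : Integrable (fun x : Fin n → ℝ => 1 + ∑ j, (x j) ^ (2 * (k + s))) μ :=
    (integrable_const 1).add (integrable_finset_sum _ fun j _ => hsingle j _)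
  -- per-monomial integral bound
  have hC : ∀ α ∈ f.support,
      |∫ x, (∏ j, x j ^ α j) * x i ^ (2 * k) ∂μ| ≤ 2 * M * n * F := by
    intro α hα
    have hαdeg : ∑ j, α j ≤ 2 * s := by
      have h1 : α.sum (fun _ e => e) ≤ f.totalDegree := le_totalDegree hα
      have h2 : α.sum (fun _ e => e) = ∑ j, α j := by
        rw [Finsupp.sum_fintype]; intro; rfl
      omega
    calc |∫ x, (∏ j, x j ^ α j) * x i ^ (2 * k) ∂μ|
        ≤ ∫ x, 1 + ∑ j, (x j) ^ (2 * (k + s)) ∂μ := by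
          have := norm_integral_le_integral_norm (μ := μ)
            (f := fun x : Fin n → ℝ => (∏ j, x j ^ α j) * x i ^ (2 * k))
          simp only [Real.norm_eq_abs] at this
          refine this.trans ?_
          apply integral_mono_of_nonneg (Filter.Eventually.of_forall fun x => abs_nonneg _) hg
          exact Filter.Eventually.of_forall fun x => ptbd i α k s hαdeg x
      _ = (∫ x, (1:ℝ) ∂μ) + ∑ j, ∫ x, (x j) ^ (2 * (k + s)) ∂μ := by
          rw [integral_add (integrable_const 1) (integrable_finset_sum _ fun j _ => hsingle j _),
            integral_finset_sum _ fun j _ => hsingle j _]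
      _ ≤ M + ∑ j : Fin n, F * M := by
          apply add_le_add
          · have := hbound 0 i
            simpa using this
          · exact Finset.sum_le_sum fun j _ => hbound (k + s) j
      _ = M + n * (F * M) := by rw [Finset.sum_const, Finset.card_univ, Fintype.card_fin,
            nsmul_eq_mul]
      _ ≤ 2 * M * n * F := by nlinarith [mul_le_mul hn1 hF1 zero_le_one (by linarith : (0:ℝ) ≤ n)]
  -- expand the integral
  have hexp : ∫ x, eval x f * x i ^ (2 * k) ∂μ
      = ∑ α ∈ f.support, f.coeff α * ∫ x, (∏ j, x j ^ α j) * x i ^ (2 * k) ∂μ := by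
    have hev : ∀ x : Fin n → ℝ, eval x f * x i ^ (2 * k)
        = ∑ α ∈ f.support, f.coeff α * ((∏ j, x j ^ α j) * x i ^ (2 * k)) := by
      intro x
      rw [eval_eq', Finset.sum_mul]
      exact Finset.sum_congr rfl fun α _ => mul_assoc _ _ _
    simp_rw [hev]
    rw [integral_finset_sum _ fun α _ => ((hmon α).const_mul _)]
    exact Finset.sum_congr rfl fun α _ => integral_const_mul _ _
  rw [hexp]
  calc |∑ α ∈ f.support, f.coeff α * ∫ x, (∏ j, x j ^ α j) * x i ^ (2 * k) ∂μ|
      ≤ ∑ α ∈ f.support, |f.coeff α| * (2 * M * n * F) := by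
        refine (Finset.abs_sum_le_sum_abs _ _).trans (Finset.sum_le_sum fun α hα => ?_)
        rw [abs_mul]
        exact mul_le_mul_of_nonneg_left (hC α hα) (abs_nonneg _)
    _ = 2 * M * n * l1norm f * F := by
        rw [← Finset.sum_mul, l1norm]; ring
end
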